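/- arXiv:1808.01817 — 4 statements merged into one kernel-verified Lean document; each statement's English description precedes it below -/
import Mathlib

section
/- For n ≥ 2, 0 ≤ α ≤ 1 and x ∈ [0,1], the generalized Bernstein basis functions sum to one: ∑_{k=0}^{n} p_{n,k}^{(α)}(x) = 1, where p_{n,k}^{(α)}(x) = [C(n-2,k)(1-α)x + C(n-2,k-2)(1-α)(1-x) + C(n,k) α x(1-x)] x^{k-1} (1-x)^{n-k-1}. -/
open MeasureTheory Filter Finset Real

/-- Generalized Bernstein basis function `p_{n,k}^{(α)}(x)` (polynomial form). -/
noncomputable def bernP (n k : ℕ) (α x : ℝ) : ℝ :=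
  ((n - 2).choose k : ℝ) * (1 - α) * x ^ k * (1 - x) ^ (n - k - 1)
    + (if 2 ≤ k then (((n - 2).choose (k - 2)) : ℝ) else 0) * (1 - α) * x ^ (k - 1) * (1 - x) ^ (n - k)
    + (n.choose k : ℝ) * α * x ^ k * (1 - x) ^ (n - k)

/-- Euler Beta function. -/
noncomputable def betaR (e f : ℝ) : ℝ := Real.Gamma e * Real.Gamma f / Real.Gamma (e + f)

/-- The Beta density `μ_{n,ρ,k}`. -/
noncomputable def muD (n k : ℕ) (ρ t : ℝ) : ℝ :=
  t ^ ((k : ℝ) * ρ) * (1 - t) ^ (((n : ℝ) - (k : ℝ)) * ρ) /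
    betaR ((k : ℝ) * ρ + 1) (((n : ℝ) - (k : ℝ)) * ρ + 1)

/-- The generalized Bernstein–Durrmeyer operator. -/
noncomputable def G (n : ℕ) (α ρ : ℝ) (f : ℝ → ℝ) (x : ℝ) : ℝ :=
  ∑ k ∈ Finset.range (n + 1), bernP n k α x * ∫ t in (0:ℝ)..1, muD n k ρ t * f t

/-! With `n = m + 2`, the three summands of `bernP` sum over `k` to `(1 - α)` times the binomial
expansion of `(1 - x) (x + (1 - x)) ^ m`, `(1 - α)` times that of `x (x + (1 - x)) ^ m`, and `α`
times that of `(x + (1 - x)) ^ (m + 2)`; hence the total is `(1 - α) (1 - x) + (1 - α) x + α = 1`. -/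

section BinomialSums

variable {R : Type*} [CommRing R]

theorem sum_range_choose_mul_pow_mul_one_sub_pow (m : ℕ) (x : R) {N : ℕ} (hN : m < N) :
    ∑ k ∈ range N, (m.choose k : R) * x ^ k * (1 - x) ^ (m - k) = 1 := by
  have hsub : range (m + 1) ⊆ range N := range_subset_range.mpr hN
  rw [← sum_subset hsub fun k _ hk => by
    simp [Nat.choose_eq_zero_of_lt (by simpa using hk : m < k)]]
  calc _ = (x + (1 - x)) ^ m := by rw [add_pow]; exact sum_congr rfl fun k _ => by ring
    _ = 1 := by rw [add_sub_cancel, one_pow]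

theorem sum_range_choose_mul_pow_mul_one_sub_pow_succ (m : ℕ) (x : R) {N : ℕ} (hN : m < N) :
    ∑ k ∈ range N, (m.choose k : R) * x ^ k * (1 - x) ^ (m + 1 - k) = 1 - x := by
  have hterm : ∀ k, (m.choose k : R) * x ^ k * (1 - x) ^ (m + 1 - k)
      = (1 - x) * ((m.choose k : R) * x ^ k * (1 - x) ^ (m - k)) := fun k => by
    rcases le_or_gt k m with hk | hk
    · rw [Nat.sub_add_comm hk, pow_succ]; ring
    · simp [Nat.choose_eq_zero_of_lt hk]
  simp_rw [hterm, ← mul_sum, sum_range_choose_mul_pow_mul_one_sub_pow m x hN, mul_one]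

theorem sum_range_choose_sub_two_mul_pow_mul_one_sub_pow (m : ℕ) (x : R) {N : ℕ}
    (hN : m < N) :
    ∑ k ∈ range (N + 2), (if 2 ≤ k then (m.choose (k - 2) : R) else 0)
      * x ^ (k - 1) * (1 - x) ^ (m + 2 - k) = x := by
  have hterm : ∀ k, (m.choose k : R) * x ^ (k + 1) * (1 - x) ^ (m - k)
      = x * ((m.choose k : R) * x ^ k * (1 - x) ^ (m - k)) := fun k => by ring
  -- the terms `k = 0, 1` vanish; the shift `k ↦ k + 2` leaves `x` times a binomial expansion
  simp [sum_range_succ' _ (N + 1), sum_range_succ' _ N, hterm, ← mul_sum,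
    sum_range_choose_mul_pow_mul_one_sub_pow m x hN]

end BinomialSums

theorem bernP_add_two (m k : ℕ) (α x : ℝ) :
    bernP (m + 2) k α x
      = (1 - α) * ((m.choose k : ℝ) * x ^ k * (1 - x) ^ (m + 1 - k))
        + (1 - α) * ((if 2 ≤ k then (m.choose (k - 2) : ℝ) else 0)
            * x ^ (k - 1) * (1 - x) ^ (m + 2 - k))
        + α * (((m + 2).choose k : ℝ) * x ^ k * (1 - x) ^ (m + 2 - k)) := by
  rw [bernP, Nat.add_sub_cancel, show m + 2 - k - 1 = m + 1 - k by omega]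
  ring

theorem bernP_sum_eq_one_general (n : ℕ) (hn : 2 ≤ n) (α x : ℝ) :
    ∑ k ∈ Finset.range (n + 1), bernP n k α x = 1 := by
  obtain ⟨m, rfl⟩ : ∃ m, n = m + 2 := ⟨n - 2, by omega⟩
  simp_rw [bernP_add_two, sum_add_distrib, ← mul_sum]
  rw [sum_range_choose_mul_pow_mul_one_sub_pow_succ m x (by omega),
    sum_range_choose_sub_two_mul_pow_mul_one_sub_pow m x (Nat.lt_succ_self m),
    sum_range_choose_mul_pow_mul_one_sub_pow (m + 2) x (Nat.lt_succ_self _)]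
  ring

theorem bernP_sum_eq_one (n : ℕ) (hn : 2 ≤ n) (α x : ℝ)
    (hα : α ∈ Set.Icc (0:ℝ) 1) (hx : x ∈ Set.Icc (0:ℝ) 1) :
    ∑ k ∈ Finset.range (n + 1), bernP n k α x = 1 :=
  bernP_sum_eq_one_general n hn α x
end

section
/- For all n ≥ 2, 0 ≤ α ≤ 1, ρ > 0 and x ∈ [0,1], the first moment of the generalized Bernstein–Durrmeyer operator is G_{n,ρ}^{(α)}(e₁; x) = (nρ x + 1)/(nρ + 2), where e₁(t) = t. -/
/-!
By the Beta integral, `∫ t μ_{n,ρ,k}(t) dt = (kρ + 1)/(nρ + 2)`, so `G(e₁; x)` is the mean of the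
affine function `k ↦ (ρk + 1)/(nρ + 2)` against the weights `p_{n,k}^{(α)}(x)`. The three pieces of
`p_{n,k}^{(α)}(x)` are Bernstein basis polynomials of degree `n - 2` (times `1 - x`, resp. `x` and
shifted by two) and of degree `n`, so `∑ b_{m,k} = 1` and `∑ k b_{m,k} = m x` give the mean of
`k ↦ ck + d` against each piece; the pieces combine to `ρnx + 1` whatever `α` is.
-/

open MeasureTheory Filter Finset Real

lemma betaR_eq_integral {a b : ℝ} (ha : 0 < a) (hb : 0 < b) :
    betaR a b = ∫ t in (0:ℝ)..1, t ^ (a - 1) * (1 - t) ^ (b - 1) := by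
  have hcomplex := Complex.Gamma_mul_Gamma_eq_betaIntegral (s := (a : ℂ)) (t := (b : ℂ))
    (by simpa using ha) (by simpa using hb)
  have hreal : Complex.betaIntegral a b =
      ((∫ t in (0:ℝ)..1, t ^ (a - 1) * (1 - t) ^ (b - 1) : ℝ) : ℂ) := by
    rw [Complex.betaIntegral, ← intervalIntegral.integral_ofReal]
    refine intervalIntegral.integral_congr fun t ht => ?_
    rw [Set.uIcc_of_le zero_le_one] at ht
    rw [Complex.ofReal_mul, Complex.ofReal_cpow ht.1, Complex.ofReal_cpow (sub_nonneg.2 ht.2)]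
    push_cast
    rfl
  rw [hreal, ← Complex.ofReal_add, Complex.Gamma_ofReal, Complex.Gamma_ofReal,
    Complex.Gamma_ofReal] at hcomplex
  rw [betaR, div_eq_iff (Real.Gamma_pos_of_pos (by linarith)).ne', ← mul_comm (Real.Gamma (a + b))]
  exact_mod_cast hcomplex

lemma betaR_pos {a b : ℝ} (ha : 0 < a) (hb : 0 < b) : 0 < betaR a b :=
  div_pos (mul_pos (Real.Gamma_pos_of_pos ha) (Real.Gamma_pos_of_pos hb))
    (Real.Gamma_pos_of_pos (by linarith))

lemma betaR_add_one_left {a b : ℝ} (ha : a ≠ 0) (hab : a + b ≠ 0) :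
    betaR (a + 1) b = a / (a + b) * betaR a b := by
  rw [betaR, betaR, add_right_comm, Real.Gamma_add_one ha, Real.Gamma_add_one hab]
  simp only [div_eq_mul_inv, mul_inv]
  ring

lemma integral_rpow_mul_one_sub_rpow_mul_self {a b : ℝ} (ha : -1 < a) (hb : -1 < b) :
    ∫ t in (0:ℝ)..1, t ^ a * (1 - t) ^ b * t = (a + 1) / (a + b + 2) * betaR (a + 1) (b + 1) := by
  have hintegrand : ∀ t ∈ Set.uIcc (0:ℝ) 1,
      t ^ a * (1 - t) ^ b * t = t ^ (a + 2 - 1) * (1 - t) ^ (b + 1 - 1) := by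
    intro t ht
    rw [Set.uIcc_of_le zero_le_one] at ht
    rw [show a + 2 - 1 = a + 1 by ring, add_sub_cancel_right,
      Real.rpow_add_one' ht.1 (by linarith)]
    ring
  rw [intervalIntegral.integral_congr hintegrand, ← betaR_eq_integral (by linarith) (by linarith),
    show a + 2 = (a + 1) + 1 by ring, betaR_add_one_left (by linarith) (by linarith)]
  ring_nf

lemma integral_muD_mul_self {n k : ℕ} (hk : k ≤ n) {ρ : ℝ} (hρ : 0 ≤ ρ) :
    ∫ t in (0:ℝ)..1, muD n k ρ t * t = ((k : ℝ) * ρ + 1) / ((n : ℝ) * ρ + 2) := by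
  have ha : 0 ≤ (k : ℝ) * ρ := by positivity
  have hb : 0 ≤ ((n : ℝ) - k) * ρ := mul_nonneg (sub_nonneg.2 (Nat.cast_le.2 hk)) hρ
  have hB := betaR_pos (a := (k : ℝ) * ρ + 1) (b := ((n : ℝ) - k) * ρ + 1)
    (by linarith) (by linarith)
  simp only [muD, div_mul_eq_mul_div]
  rw [intervalIntegral.integral_div, integral_rpow_mul_one_sub_rpow_mul_self (by linarith)
    (by linarith), show (k : ℝ) * ρ + ((n : ℝ) - k) * ρ + 2 = n * ρ + 2 by ring]
  exact mul_div_cancel_right₀ _ hB.ne'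

section BinomialSums

variable {R : Type*} [CommRing R]

lemma sum_affine_mul_choose_mul_pow_mul_one_sub_pow (m : ℕ) (c d x : R) :
    ∑ k ∈ range (m + 1), (c * k + d) * ((m.choose k : R) * x ^ k * (1 - x) ^ (m - k))
      = c * m * x + d := by
  have hsum := congrArg (Polynomial.eval x) (bernsteinPolynomial.sum R m)
  have hmean := congrArg (Polynomial.eval x) (bernsteinPolynomial.sum_smul R m)
  simp only [Polynomial.eval_finsetSum, Polynomial.eval_one, Polynomial.eval_X,
    bernsteinPolynomial, Polynomial.eval_mul, Polynomial.eval_pow, Polynomial.eval_sub,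
    Polynomial.eval_natCast, nsmul_eq_mul, mul_assoc] at hsum hmean
  simp only [add_mul, mul_assoc, Finset.sum_add_distrib, ← Finset.mul_sum]
  rw [hmean, hsum, mul_one]

lemma sum_affine_mul_choose_mul_pow_mul_one_sub_pow_succ (m : ℕ) (c d x : R) :
    ∑ k ∈ range (m + 3), (c * k + d) * ((m.choose k : R) * x ^ k * (1 - x) ^ (m + 1 - k))
      = (1 - x) * (c * m * x + d) := by
  rw [Finset.sum_range_succ, Finset.sum_range_succ, Nat.choose_eq_zero_of_lt (by omega),
    Nat.choose_eq_zero_of_lt (by omega), ← sum_affine_mul_choose_mul_pow_mul_one_sub_pow,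
    Finset.mul_sum]
  simp only [Nat.cast_zero, zero_mul, mul_zero, add_zero]
  refine Finset.sum_congr rfl fun k hk => ?_
  rw [Finset.mem_range] at hk
  rw [show m + 1 - k = m - k + 1 by omega, pow_succ]
  ring

lemma sum_affine_mul_choose_sub_two_mul_pow_mul_one_sub_pow (m : ℕ) (c d x : R) :
    ∑ k ∈ range (m + 3), (c * k + d) *
        ((if 2 ≤ k then (m.choose (k - 2) : R) else 0) * x ^ (k - 1) * (1 - x) ^ (m + 2 - k))
      = x * (c * m * x + 2 * c + d) := by
  rw [Finset.sum_range_succ', Finset.sum_range_succ', add_assoc,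
    show c * m * x + 2 * c + d = c * m * x + (2 * c + d) by ring,
    ← sum_affine_mul_choose_mul_pow_mul_one_sub_pow m c (2 * c + d), Finset.mul_sum]
  simp only [Nat.reduceLeDiff, if_true, le_add_iff_nonneg_left, zero_le, if_false, zero_mul,
    mul_zero, add_zero]
  refine Finset.sum_congr rfl fun k hk => ?_
  rw [Finset.mem_range] at hk
  rw [show k + 1 + 1 - 2 = k by omega, show k + 1 + 1 - 1 = k + 1 by omega,
    show m + 2 - (k + 1 + 1) = m - k by omega, pow_succ]
  push_cast
  ring

end BinomialSums

lemma sum_affine_mul_bernP {n : ℕ} (hn : 2 ≤ n) (α c d x : ℝ) :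
    ∑ k ∈ range (n + 1), (c * k + d) * bernP n k α x = c * n * x + d := by
  obtain ⟨m, rfl⟩ := Nat.exists_eq_add_of_le' hn
  have hsplit : ∀ k ∈ range (m + 2 + 1), (c * k + d) * bernP (m + 2) k α x
      = (1 - α) * ((c * k + d) * ((m.choose k : ℝ) * x ^ k * (1 - x) ^ (m + 1 - k)))
        + (1 - α) * ((c * k + d) * ((if 2 ≤ k then (m.choose (k - 2) : ℝ) else 0)
            * x ^ (k - 1) * (1 - x) ^ (m + 2 - k)))
        + α * ((c * k + d) * (((m + 2).choose k : ℝ) * x ^ k * (1 - x) ^ (m + 2 - k))) := by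
    intro k _
    rw [bernP, Nat.add_sub_cancel, show m + 2 - k - 1 = m + 1 - k by omega]
    ring
  rw [Finset.sum_congr rfl hsplit, Finset.sum_add_distrib, Finset.sum_add_distrib,
    ← Finset.mul_sum, ← Finset.mul_sum, ← Finset.mul_sum,
    sum_affine_mul_choose_mul_pow_mul_one_sub_pow_succ,
    sum_affine_mul_choose_sub_two_mul_pow_mul_one_sub_pow,
    sum_affine_mul_choose_mul_pow_mul_one_sub_pow]
  push_cast
  ring

theorem G_e1_general (n : ℕ) (hn : 2 ≤ n) (α ρ : ℝ) (hρ : 0 < ρ) (x : ℝ) :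
    G n α ρ (fun t => t) x = ((n : ℝ) * ρ * x + 1) / ((n : ℝ) * ρ + 2) := by
  have hmoment : ∀ k ∈ range (n + 1), bernP n k α x * ∫ t in (0:ℝ)..1, muD n k ρ t * t
      = (ρ * k + 1) * bernP n k α x / (n * ρ + 2) := by
    intro k hk
    rw [integral_muD_mul_self (Nat.lt_succ_iff.1 (Finset.mem_range.1 hk)) hρ.le]
    ring
  rw [G, Finset.sum_congr rfl hmoment, ← Finset.sum_div, sum_affine_mul_bernP hn]
  ring

theorem G_e1 (n : ℕ) (hn : 2 ≤ n) (α ρ : ℝ)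
    (hα : α ∈ Set.Icc (0:ℝ) 1) (hρ : 0 < ρ) (x : ℝ) (hx : x ∈ Set.Icc (0:ℝ) 1) :
    G n α ρ (fun t => t) x = ((n : ℝ) * ρ * x + 1) / ((n : ℝ) * ρ + 2) :=
  G_e1_general n hn α ρ hρ x
end

section
/- For fixed 0 ≤ α ≤ 1 and ρ > 0, there exists a positive constant X (depending only on α and ρ) such that for all n ≥ 2 and all x ∈ [0,1], G_{n,ρ}^{(α)}((t−x)²; x) ≤ X · x(1−x)/(1 + nρ) + X/(1+nρ)², equivalently (using x(1−x) ≤ 1/4) the second central moment is bounded by a constant times x(1−x)/(1+nρ) plus a term of order (1+nρ)^{-2}; in particular G_{n,ρ}^{(α)}((t−x)²;x) ≤ X/(1+nρ) for all x ∈ [0,1]. -/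
open MeasureTheory Filter Finset Real

/-! The densities `muD n k ρ` are Beta densities, whose first two moments are explicit, so
`∫ muD n k ρ t * (t - x) ^ 2` is a quadratic polynomial in `k`. Splitting the generalized basis
`pₖ = bernP n k α x` into three binomial families reduces its moments to the classical Bernstein
identities: `∑ₖ pₖ = 1`, `∑ₖ k pₖ = n x` and
`∑ₖ k (k - 1) pₖ = n (n - 1) x² + 2 (1 - α) x (1 - x)`.
This yields the closed form of the second central moment. Its numerator is at most
`(1 + 2ρ) x (1 - x) (1 + nρ) + 2` because `α ≥ 0` and `n ≥ 2`, and its denominator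
`(nρ + 2)(nρ + 3)` is at least `(1 + nρ)²`, which gives the estimate with `X = 3 + 2ρ`. -/

lemma betaR_eq_beta : betaR = ProbabilityTheory.beta := rfl

lemma betaR_pos_s10 {e f : ℝ} (he : 0 < e) (hf : 0 < f) : 0 < betaR e f :=
  betaR_eq_beta ▸ ProbabilityTheory.beta_pos he hf

lemma betaR_add_one_left_s10 {e f : ℝ} (he : e ≠ 0) (hef : e + f ≠ 0) :
    betaR (e + 1) f = e / (e + f) * betaR e f := by
  rw [betaR, betaR, add_right_comm, Gamma_add_one he, Gamma_add_one hef, mul_assoc,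
    mul_div_mul_comm]

lemma integral_rpow_mul_one_sub_rpow_mul_pow {a b : ℝ} (ha : -1 < a) (hb : -1 < b) (j : ℕ) :
    ∫ t in (0:ℝ)..1, t ^ a * (1 - t) ^ b * t ^ j = betaR (a + j + 1) (b + 1) := by
  have hj0 : (0:ℝ) ≤ j := j.cast_nonneg
  rw [betaR_eq_integral (by linarith) (by linarith), add_sub_cancel_right, add_sub_cancel_right]
  refine intervalIntegral.integral_congr fun t ht => ?_
  rw [Set.uIcc_of_le zero_le_one] at ht
  rcases j.eq_zero_or_pos with rfl | hj
  · simp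
  · have : (1:ℝ) ≤ j := by exact_mod_cast hj
    rw [rpow_add' ht.1 (by linarith), rpow_natCast]
    ring

lemma integral_rpow_mul_one_sub_rpow_mul_sq_sub {a b : ℝ} (ha : -1 < a) (hb : -1 < b) (x : ℝ) :
    ∫ t in (0:ℝ)..1, t ^ a * (1 - t) ^ b * (t - x) ^ 2 = betaR (a + 1) (b + 1) *
      ((a + 1) * (a + 2) / ((a + b + 2) * (a + b + 3)) - 2 * x * (a + 1) / (a + b + 2) +
        x ^ 2) := by
  have hint (j : ℕ) :
      IntervalIntegrable (fun t : ℝ => t ^ a * (1 - t) ^ b * t ^ j) volume 0 1 := by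
    have hj : (0:ℝ) ≤ j := j.cast_nonneg
    -- a non-integrable function would have integral `0`, but this one integrates to a Beta value
    refine intervalIntegral.intervalIntegrable_of_integral_ne_zero ?_
    rw [integral_rpow_mul_one_sub_rpow_mul_pow ha hb]
    exact (betaR_pos_s10 (by linarith) (by linarith)).ne'
  have hsq (t : ℝ) : t ^ a * (1 - t) ^ b * (t - x) ^ 2 = t ^ a * (1 - t) ^ b * t ^ 2
      - 2 * x * (t ^ a * (1 - t) ^ b * t ^ 1) + x ^ 2 * (t ^ a * (1 - t) ^ b * t ^ 0) := by
    ring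
  simp_rw [hsq]
  rw [intervalIntegral.integral_add ((hint 2).sub ((hint 1).const_mul _)) ((hint 0).const_mul _),
    intervalIntegral.integral_sub (hint 2) ((hint 1).const_mul _),
    intervalIntegral.integral_const_mul, intervalIntegral.integral_const_mul,
    integral_rpow_mul_one_sub_rpow_mul_pow ha hb, integral_rpow_mul_one_sub_rpow_mul_pow ha hb,
    integral_rpow_mul_one_sub_rpow_mul_pow ha hb]
  have h1 : betaR (a + 1 + 1) (b + 1) = (a + 1) / (a + b + 2) * betaR (a + 1) (b + 1) := by
    rw [betaR_add_one_left_s10 (by linarith) (by linarith)]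
    ring_nf
  have h2 : betaR (a + 2 + 1) (b + 1) =
      (a + 2) / (a + b + 3) * ((a + 1) / (a + b + 2) * betaR (a + 1) (b + 1)) := by
    rw [show a + 2 + 1 = a + 1 + 1 + 1 by ring, betaR_add_one_left_s10 (by linarith) (by linarith), h1]
    ring_nf
  push_cast
  rw [h2, h1, add_zero]
  field_simp

lemma integral_muD_mul_sq_sub {n k : ℕ} {ρ : ℝ} (hk : k ≤ n) (hρ : 0 ≤ ρ) (x : ℝ) :
    ∫ t in (0:ℝ)..1, muD n k ρ t * (t - x) ^ 2 = (k * ρ + 1) * (k * ρ + 2) /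
      ((n * ρ + 2) * (n * ρ + 3)) - 2 * x * (k * ρ + 1) / (n * ρ + 2) + x ^ 2 := by
  have hkn : (k : ℝ) ≤ n := by exact_mod_cast hk
  have ha : (-1 : ℝ) < k * ρ := by nlinarith
  have hb : (-1 : ℝ) < (n - k) * ρ := by nlinarith
  have hB := (betaR_pos_s10 (e := k * ρ + 1) (f := (n - k) * ρ + 1) (by linarith) (by linarith)).ne'
  simp_rw [muD, div_mul_eq_mul_div, intervalIntegral.integral_div,
    integral_rpow_mul_one_sub_rpow_mul_sq_sub ha hb, mul_div_cancel_left₀ _ hB,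
    show (k : ℝ) * ρ + (n - k) * ρ = n * ρ by ring]

open Polynomial

lemma Nat.cast_mul_sub_one {R : Type*} [Ring R] (k : ℕ) :
    ((k * (k - 1) : ℕ) : R) = k * (k - 1) := by
  cases k <;> simp

lemma bernsteinPolynomial_eval {R : Type*} [CommRing R] (n ν : ℕ) (x : R) :
    (bernsteinPolynomial R n ν).eval x = n.choose ν * x ^ ν * (1 - x) ^ (n - ν) := by
  simp [bernsteinPolynomial]

lemma sum_bernsteinPolynomial_eval_mul_quadratic {R : Type*} [CommRing R] (m : ℕ)
    (x p q r : R) :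
    ∑ k ∈ range (m + 1), (bernsteinPolynomial R m k).eval x * (p + q * k + r * (k * (k - 1))) =
      p + q * (m * x) + r * (m * (m - 1) * x ^ 2) := by
  have h0 := congrArg (eval x) (bernsteinPolynomial.sum R m)
  have h1 := congrArg (eval x) (bernsteinPolynomial.sum_smul R m)
  have h2 := congrArg (eval x) (bernsteinPolynomial.sum_mul_smul R m)
  simp only [eval_finsetSum, nsmul_eq_mul, eval_one, eval_mul, eval_sub, eval_natCast, eval_X,
    eval_pow, Nat.cast_mul_sub_one] at h0 h1 h2
  calc _ = p * (∑ k ∈ range (m + 1), (bernsteinPolynomial R m k).eval x)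
        + q * ∑ k ∈ range (m + 1), (k : R) * (bernsteinPolynomial R m k).eval x
        + r * ∑ k ∈ range (m + 1), (k : R) * (k - 1) * (bernsteinPolynomial R m k).eval x := by
        rw [mul_sum, mul_sum, mul_sum, ← sum_add_distrib, ← sum_add_distrib]
        exact sum_congr rfl fun k _ => by ring
    _ = _ := by rw [h0, h1, h2, mul_one]

lemma sum_bernP_mul (m : ℕ) (α x : ℝ) (f : ℕ → ℝ) :
    ∑ k ∈ range (m + 3), bernP (m + 2) k α x * f k =
      (1 - α) * ∑ k ∈ range (m + 1),
          (bernsteinPolynomial ℝ m k).eval x * ((1 - x) * f k + x * f (k + 2)) +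
        α * ∑ k ∈ range (m + 3), (bernsteinPolynomial ℝ (m + 2) k).eval x * f k := by
  have hlow :
      ∑ k ∈ range (m + 3), (m.choose k : ℝ) * x ^ k * (1 - x) ^ (m + 2 - k - 1) * f k =
      ∑ k ∈ range (m + 1), (bernsteinPolynomial ℝ m k).eval x * ((1 - x) * f k) := by
    rw [sum_range_succ, sum_range_succ, Nat.choose_eq_zero_of_lt (by omega),
      Nat.choose_eq_zero_of_lt (by omega : m < m + 1 + 1)]
    simp only [Nat.cast_zero, zero_mul, add_zero]
    refine sum_congr rfl fun k hk => ?_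
    rw [bernsteinPolynomial_eval, show m + 2 - k - 1 = m - k + 1 by grind, pow_succ]
    ring
  have hhigh : ∑ k ∈ range (m + 3), (if 2 ≤ k then (m.choose (k - 2) : ℝ) else 0) *
      x ^ (k - 1) * (1 - x) ^ (m + 2 - k) * f k =
      ∑ k ∈ range (m + 1), (bernsteinPolynomial ℝ m k).eval x * (x * f (k + 2)) := by
    rw [sum_range_succ', sum_range_succ']
    simp only [le_add_iff_nonneg_left, zero_le, ite_true, Nat.reduceLeDiff, ite_false, zero_mul,
      add_zero]
    refine sum_congr rfl fun k _ => ?_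
    rw [bernsteinPolynomial_eval, show k + 1 + 1 - 2 = k by omega, Nat.add_sub_cancel,
      show m + 2 - (k + 1 + 1) = m - k by omega]
    ring
  have hsplit (k : ℕ) : bernP (m + 2) k α x * f k =
      (1 - α) * ((m.choose k : ℝ) * x ^ k * (1 - x) ^ (m + 2 - k - 1) * f k) +
      (1 - α) * ((if 2 ≤ k then (m.choose (k - 2) : ℝ) else 0) * x ^ (k - 1) *
        (1 - x) ^ (m + 2 - k) * f k) +
      α * ((bernsteinPolynomial ℝ (m + 2) k).eval x * f k) := by
    rw [bernP, bernsteinPolynomial_eval, Nat.add_sub_cancel]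
    ring
  simp_rw [hsplit, sum_add_distrib, ← mul_sum, hlow, hhigh, ← mul_add, ← sum_add_distrib,
    ← mul_add]

lemma sum_bernP_mul_quadratic {n : ℕ} (hn : 2 ≤ n) (α x p q r : ℝ) :
    ∑ k ∈ range (n + 1), bernP n k α x * (p + q * k + r * (k * (k - 1))) =
      p + q * (n * x) + r * (n * (n - 1) * x ^ 2 + 2 * (1 - α) * (x * (1 - x))) := by
  obtain ⟨m, rfl⟩ : ∃ m, n = m + 2 := ⟨n - 2, by omega⟩
  have hshift (k : ℕ) : (1 - x) * (p + q * k + r * (k * (k - 1))) +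
      x * (p + q * ↑(k + 2) + r * (↑(k + 2) * (↑(k + 2) - 1))) =
      (p + 2 * x * (q + r)) + (q + 4 * r * x) * k + r * (k * (k - 1)) := by
    push_cast
    ring
  simp_rw [sum_bernP_mul, hshift, sum_bernsteinPolynomial_eval_mul_quadratic]
  push_cast
  ring

lemma G_sq_sub_eq {n : ℕ} (hn : 2 ≤ n) (α : ℝ) {ρ : ℝ} (hρ : 0 ≤ ρ) (x : ℝ) :
    G n α ρ (fun t => (t - x) ^ 2) x =
      (x * (1 - x) * (ρ * (n + (n - 2 * α + 2) * ρ) - 6) + 2) / ((n * ρ + 2) * (n * ρ + 3)) := by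
  have h2 : (0 : ℝ) < n * ρ + 2 := by positivity
  have h3 : (0 : ℝ) < n * ρ + 3 := by positivity
  have hquad : ∀ k ∈ range (n + 1),
      bernP n k α x * ∫ t in (0:ℝ)..1, muD n k ρ t * (t - x) ^ 2 =
        bernP n k α x * ((2 / ((n * ρ + 2) * (n * ρ + 3)) - 2 * x / (n * ρ + 2) + x ^ 2) +
          ((ρ ^ 2 + 3 * ρ) / ((n * ρ + 2) * (n * ρ + 3)) - 2 * x * ρ / (n * ρ + 2)) * k +
          ρ ^ 2 / ((n * ρ + 2) * (n * ρ + 3)) * (k * (k - 1))) := by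
    intro k hk
    rw [integral_muD_mul_sq_sub (Nat.lt_succ_iff.mp (mem_range.mp hk)) hρ]
    field_simp
    ring
  rw [G, sum_congr rfl hquad, sum_bernP_mul_quadratic hn]
  field_simp
  ring

lemma G_sq_sub_le {n : ℕ} (hn : 2 ≤ n) {α ρ : ℝ} (hα : 0 ≤ α) (hρ : 0 ≤ ρ) {x : ℝ}
    (hx : x ∈ Set.Icc (0 : ℝ) 1) :
    G n α ρ (fun t => (t - x) ^ 2) x ≤
      (1 + 2 * ρ) * (x * (1 - x)) / (1 + n * ρ) + 2 / (1 + n * ρ) ^ 2 := by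
  have hn' : (2 : ℝ) ≤ n := by exact_mod_cast hn
  have hN : 0 < 1 + n * ρ := by positivity
  have hu : 0 ≤ x * (1 - x) := mul_nonneg hx.1 (by linarith [hx.2])
  have hnum : x * (1 - x) * (ρ * (n + (n - 2 * α + 2) * ρ) - 6) + 2 ≤
      (1 + 2 * ρ) * (x * (1 - x)) * (1 + n * ρ) + 2 := by
    have : ρ * (n + (n - 2 * α + 2) * ρ) - 6 ≤ (1 + 2 * ρ) * (1 + n * ρ) := by
      nlinarith [mul_nonneg (sub_nonneg.mpr hn') (sq_nonneg ρ), mul_nonneg hα (sq_nonneg ρ)]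
    nlinarith
  have hden : (1 + n * ρ) ^ 2 ≤ (n * ρ + 2) * (n * ρ + 3) := by nlinarith
  calc G n α ρ (fun t => (t - x) ^ 2) x
      ≤ ((1 + 2 * ρ) * (x * (1 - x)) * (1 + n * ρ) + 2) / (1 + n * ρ) ^ 2 := by
        rw [G_sq_sub_eq hn α hρ x]
        exact div_le_div₀ (by positivity) hnum (by positivity) hden
    _ = _ := by field_simp

theorem G_central_moment_two_bound (α ρ : ℝ)
    (hα : α ∈ Set.Icc (0:ℝ) 1) (hρ : 0 < ρ) :
    ∃ X : ℝ, 0 < X ∧ ∀ n : ℕ, 2 ≤ n → ∀ x ∈ Set.Icc (0:ℝ) 1,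
      G n α ρ (fun t => (t - x) ^ 2) x ≤
          X * (x * (1 - x)) / (1 + (n : ℝ) * ρ) + X / (1 + (n : ℝ) * ρ) ^ 2 ∧
      G n α ρ (fun t => (t - x) ^ 2) x ≤ X / (1 + (n : ℝ) * ρ) := by
  refine ⟨3 + 2 * ρ, by positivity, fun n hn x hx => ?_⟩
  have hG := G_sq_sub_le hn hα.1 hρ.le hx
  have hN : 1 ≤ 1 + n * ρ := le_add_of_nonneg_right (by positivity)
  have hu : x * (1 - x) ≤ 1 / 4 := by nlinarith [sq_nonneg (x - 1 / 2)]
  have hu0 : 0 ≤ x * (1 - x) := mul_nonneg hx.1 (by linarith [hx.2])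
  constructor
  · refine hG.trans (add_le_add ?_ ?_) <;> gcongr <;> linarith
  · calc _ ≤ _ := hG
      _ ≤ (1 + 2 * ρ) * 1 / (1 + n * ρ) + 2 / (1 + n * ρ) := by
        gcongr
        · linarith
        · nlinarith
      _ = (3 + 2 * ρ) / (1 + n * ρ) := by ring
end

section
/- (Estimate with first derivative) Let f : [0,1] → ℝ be continuously differentiable. Then for every n ≥ 2, 0 ≤ α ≤ 1, ρ > 0, δ > 0 and x ∈ [0,1], |G_{n,ρ}^{(α)}(f; x) − f(x)| ≤ |f'(x)| · |1−2x|/(nρ+2) + ω(f', δ) (1 + τ(x)^{1/2}/δ) τ(x)^{1/2}, where τ(x) = G_{n,ρ}^{(α)}((t−x)²; x) and ω(f',δ) = sup{|f'(u)−f'(v)| : u,v ∈ [0,1], |u−v| ≤ δ} is the modulus of continuity of f'. In particular, with δ = √τ(x), |G_{n,ρ}^{(α)}(f;x) − f(x)| ≤ |f'(x)||1−2x|/(nρ+2) + 2√(τ(x)) ω(f', √(τ(x))). -/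
open MeasureTheory Filter Finset Real

/-!
For fixed `x`, `G(·; x)` is integration against the probability density
`∑ₖ p_{n,k}(x) μ_{n,ρ,k}` on `[0, 1]`, so it suffices to prove the estimate for an arbitrary
probability density `K`. The Taylor remainder `R t = f t - f x - f' x (t - x)` is the integral of
`f' u - f' x` from `x` to `t`, hence `|R t| ≤ ω(f', δ) (|t - x| + (t - x)² / δ)`; integrating
against `K` and bounding `∫ K |t - x| ≤ √τ` by Jensen gives the estimate. The first moment
`(1 - 2x) / (nρ + 2)` comes from the Beta integrals and the first two moments of the Bernstein
basis.
-/

noncomputable def modulusOn (s : Set ℝ) (g : ℝ → ℝ) (δ : ℝ) : ℝ :=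
  sSup {y : ℝ | ∃ u ∈ s, ∃ v ∈ s, |u - v| ≤ δ ∧ y = |g u - g v|}

section Modulus

variable {s : Set ℝ} {g : ℝ → ℝ} {δ u v : ℝ}

lemma modulusOn_nonneg : 0 ≤ modulusOn s g δ :=
  Real.sSup_nonneg fun _ ⟨_, _, _, _, _, hy⟩ => hy ▸ abs_nonneg _

lemma abs_sub_le_modulusOn (hs : IsCompact s) (hg : ContinuousOn g s) (hu : u ∈ s) (hv : v ∈ s)
    (huv : |u - v| ≤ δ) : |g u - g v| ≤ modulusOn s g δ := by
  obtain ⟨C, hC⟩ := hs.exists_bound_of_continuousOn hg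
  refine le_csSup ⟨2 * C, ?_⟩ ⟨u, hu, v, hv, huv, rfl⟩
  rintro _ ⟨u, hu, v, hv, -, rfl⟩
  linarith [abs_sub (g u) (g v), hC u hu, hC v hv, Real.norm_eq_abs (g u), Real.norm_eq_abs (g v)]

/-- Walking from `v` to `u` in `⌈|u - v| / δ⌉` steps of length at most `δ`. -/
lemma abs_sub_le_modulusOn_mul (hs : IsCompact s) (hconv : Convex ℝ s) (hg : ContinuousOn g s)
    (hδ : 0 < δ) (hu : u ∈ s) (hv : v ∈ s) :
    |g u - g v| ≤ modulusOn s g δ * (1 + |u - v| / δ) := by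
  have hω := modulusOn_nonneg (s := s) (g := g) (δ := δ)
  rcases le_or_gt |u - v| δ with hclose | hfar
  · calc |g u - g v| ≤ modulusOn s g δ := abs_sub_le_modulusOn hs hg hu hv hclose
      _ ≤ modulusOn s g δ * (1 + |u - v| / δ) := le_mul_of_one_le_right hω (by simp; positivity)
  set N : ℕ := ⌈|u - v| / δ⌉₊
  have hNpos : (0 : ℝ) < N := by
    have : (1 : ℝ) < |u - v| / δ := (one_lt_div hδ).mpr hfar
    exact_mod_cast Nat.ceil_pos.mpr (by linarith)
  set p : ℕ → ℝ := fun i => v + ((i : ℝ) / N) • (u - v)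
  have hp_mem : ∀ i ≤ N, p i ∈ s := fun i hi =>
    hconv.add_smul_sub_mem hv hu ⟨by positivity, div_le_one_of_le₀ (by exact_mod_cast hi) hNpos.le⟩
  have hstep : ∀ i < N, |g (p (i + 1)) - g (p i)| ≤ modulusOn s g δ := by
    intro i hi
    refine abs_sub_le_modulusOn hs hg (hp_mem _ hi) (hp_mem _ hi.le) ?_
    have hd : p (i + 1) - p i = (u - v) / N := by
      simp only [p, smul_eq_mul]; push_cast; field_simp; ring
    rw [hd, abs_div, abs_of_pos hNpos, div_le_iff₀ hNpos, ← div_le_iff₀' hδ]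
    exact Nat.le_ceil _
  calc |g u - g v| = |∑ i ∈ range N, (g (p (i + 1)) - g (p i))| := by
        rw [Finset.sum_range_sub (fun i => g (p i))]
        simp [p, hNpos.ne']
    _ ≤ ∑ i ∈ range N, modulusOn s g δ :=
        (Finset.abs_sum_le_sum_abs _ _).trans
          (Finset.sum_le_sum fun i hi => hstep i (Finset.mem_range.mp hi))
    _ = modulusOn s g δ * N := by rw [Finset.sum_const, Finset.card_range, nsmul_eq_mul, mul_comm]
    _ ≤ modulusOn s g δ * (1 + |u - v| / δ) := by
        gcongr
        linarith [Nat.ceil_lt_add_one (show (0:ℝ) ≤ |u - v| / δ by positivity)]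

end Modulus

lemma abs_sub_sub_mul_le_modulusOn {s : Set ℝ} {f f' : ℝ → ℝ} {δ x t : ℝ} (hs : IsCompact s)
    (hconv : Convex ℝ s) (hf : ∀ y ∈ s, HasDerivAt f (f' y) y) (hf' : ContinuousOn f' s)
    (hδ : 0 < δ) (hx : x ∈ s) (ht : t ∈ s) :
    |f t - f x - f' x * (t - x)| ≤ modulusOn s f' δ * (|t - x| + (t - x) ^ 2 / δ) := by
  have hsub : Set.uIcc x t ⊆ s := hconv.ordConnected.uIcc_subset hx ht
  have hint : IntervalIntegrable f' volume x t := (hf'.mono hsub).intervalIntegrable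
  have hrem : ∫ u in x..t, (f' u - f' x) = f t - f x - f' x * (t - x) := by
    rw [intervalIntegral.integral_sub hint intervalIntegrable_const,
      intervalIntegral.integral_eq_sub_of_hasDerivAt (fun u hu => hf u (hsub hu)) hint,
      intervalIntegral.integral_const, smul_eq_mul]
    ring
  have hbound : ∀ u ∈ Set.uIoc x t, ‖f' u - f' x‖ ≤ modulusOn s f' δ * (1 + |t - x| / δ) := by
    intro u hu
    have hux : |u - x| ≤ |t - x| := Set.abs_sub_left_of_mem_uIcc (Set.uIoc_subset_uIcc hu)
    calc ‖f' u - f' x‖ ≤ modulusOn s f' δ * (1 + |u - x| / δ) :=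
          abs_sub_le_modulusOn_mul hs hconv hf' hδ (hsub (Set.uIoc_subset_uIcc hu)) hx
      _ ≤ modulusOn s f' δ * (1 + |t - x| / δ) := by
          gcongr
          exact modulusOn_nonneg
  calc |f t - f x - f' x * (t - x)| ≤ modulusOn s f' δ * (1 + |t - x| / δ) * |t - x| := by
        simpa only [hrem, Real.norm_eq_abs] using
          intervalIntegral.norm_integral_le_of_norm_le_const hbound
    _ = modulusOn s f' δ * (|t - x| + (t - x) ^ 2 / δ) := by
        rw [← sq_abs (t - x)]
        field_simp

section ProbabilityDensity

variable {a b : ℝ} {K : ℝ → ℝ}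

lemma IntervalIntegrable.mul_continuousOn_Icc (hab : a ≤ b) (hK : IntervalIntegrable K volume a b)
    {g : ℝ → ℝ} (hg : ContinuousOn g (Set.Icc a b)) :
    IntervalIntegrable (fun t => K t * g t) volume a b :=
  hK.mul_continuousOn (by rwa [Set.uIcc_of_le hab])

lemma integral_mul_mono_on (hab : a ≤ b) (hK : IntervalIntegrable K volume a b)
    (hK0 : ∀ t ∈ Set.Icc a b, 0 ≤ K t) {g h : ℝ → ℝ} (hg : ContinuousOn g (Set.Icc a b))
    (hh : ContinuousOn h (Set.Icc a b)) (hgh : ∀ t ∈ Set.Icc a b, g t ≤ h t) :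
    ∫ t in a..b, K t * g t ≤ ∫ t in a..b, K t * h t :=
  intervalIntegral.integral_mono_on hab (hK.mul_continuousOn_Icc hab hg)
    (hK.mul_continuousOn_Icc hab hh) fun t ht => mul_le_mul_of_nonneg_left (hgh t ht) (hK0 t ht)

lemma abs_integral_mul_le (hab : a ≤ b) (hK0 : ∀ t ∈ Set.Icc a b, 0 ≤ K t) (g : ℝ → ℝ) :
    |∫ t in a..b, K t * g t| ≤ ∫ t in a..b, K t * |g t| := by
  refine (intervalIntegral.abs_integral_le_integral_abs hab).trans_eq
    (intervalIntegral.integral_congr fun t ht => ?_)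
  rw [Set.uIcc_of_le hab] at ht
  simp only [abs_mul, abs_of_nonneg (hK0 t ht)]

/-- Jensen's inequality for the square: the variance `∫ K (g - m)²` of `g` is nonnegative. -/
lemma sq_integral_mul_le (hab : a ≤ b) (hK : IntervalIntegrable K volume a b)
    (hK0 : ∀ t ∈ Set.Icc a b, 0 ≤ K t) (hK1 : ∫ t in a..b, K t = 1) {g : ℝ → ℝ}
    (hg : ContinuousOn g (Set.Icc a b)) :
    (∫ t in a..b, K t * g t) ^ 2 ≤ ∫ t in a..b, K t * g t ^ 2 := by
  set m := ∫ t in a..b, K t * g t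
  have hvar : 0 ≤ ∫ t in a..b, K t * (g t - m) ^ 2 := by
    simpa using integral_mul_mono_on hab hK hK0 continuousOn_const
      ((hg.sub continuousOn_const).pow 2) fun t _ => sq_nonneg (g t - m)
  have hexpand : ∫ t in a..b, K t * (g t - m) ^ 2
      = (∫ t in a..b, K t * g t ^ 2) - 2 * m * m + m ^ 2 * ∫ t in a..b, K t := by
    have hpt : ∀ t, K t * (g t - m) ^ 2 = K t * g t ^ 2 - 2 * m * (K t * g t) + m ^ 2 * K t :=
      fun t => by ring
    have hg2 : ContinuousOn (fun t => g t ^ 2) (Set.Icc a b) := hg.pow 2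
    simp_rw [hpt]
    rw [intervalIntegral.integral_add ((hK.mul_continuousOn_Icc hab hg2).sub
        ((hK.mul_continuousOn_Icc hab hg).const_mul _)) (hK.const_mul _),
      intervalIntegral.integral_sub (hK.mul_continuousOn_Icc hab hg2)
        ((hK.mul_continuousOn_Icc hab hg).const_mul _),
      intervalIntegral.integral_const_mul, intervalIntegral.integral_const_mul]
  rw [hexpand, hK1] at hvar
  linarith

lemma abs_integral_mul_taylor_remainder_le (hab : a ≤ b) (hK : IntervalIntegrable K volume a b)
    (hK0 : ∀ t ∈ Set.Icc a b, 0 ≤ K t) (hK1 : ∫ t in a..b, K t = 1) {f f' : ℝ → ℝ}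
    (hf : ∀ y ∈ Set.Icc a b, HasDerivAt f (f' y) y) (hf' : ContinuousOn f' (Set.Icc a b))
    {x δ : ℝ} (hx : x ∈ Set.Icc a b) (hδ : 0 < δ) :
    |∫ t in a..b, K t * (f t - f x - f' x * (t - x))| ≤
      modulusOn (Set.Icc a b) f' δ * (√(∫ t in a..b, K t * (t - x) ^ 2)
        + (∫ t in a..b, K t * (t - x) ^ 2) / δ) := by
  set ω := modulusOn (Set.Icc a b) f' δ
  have hdist : ContinuousOn (fun t : ℝ => |t - x|) (Set.Icc a b) := by fun_prop
  have hsq : ContinuousOn (fun t : ℝ => (t - x) ^ 2) (Set.Icc a b) := by fun_prop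
  have hfirst : ∫ t in a..b, K t * |t - x| ≤ √(∫ t in a..b, K t * (t - x) ^ 2) := by
    have := sq_integral_mul_le hab hK hK0 hK1 hdist
    simp only [sq_abs] at this
    exact (le_abs_self _).trans (Real.abs_le_sqrt this)
  have hfc : ContinuousOn f (Set.Icc a b) := fun y hy => (hf y hy).continuousAt.continuousWithinAt
  calc |∫ t in a..b, K t * (f t - f x - f' x * (t - x))|
      ≤ ∫ t in a..b, K t * |f t - f x - f' x * (t - x)| := abs_integral_mul_le hab hK0 _
    _ ≤ ∫ t in a..b, K t * (ω * (|t - x| + (t - x) ^ 2 / δ)) :=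
        integral_mul_mono_on hab hK hK0 (by fun_prop) (by fun_prop) fun t ht =>
          abs_sub_sub_mul_le_modulusOn isCompact_Icc (convex_Icc a b) hf hf' hδ hx ht
    _ = ω * ((∫ t in a..b, K t * |t - x|) + (∫ t in a..b, K t * (t - x) ^ 2) / δ) := by
        have hpt : ∀ t, K t * (ω * (|t - x| + (t - x) ^ 2 / δ))
            = ω * (K t * |t - x| + δ⁻¹ * (K t * (t - x) ^ 2)) := fun t => by ring
        simp_rw [hpt]
        rw [intervalIntegral.integral_const_mul, intervalIntegral.integral_add
            (hK.mul_continuousOn_Icc hab hdist) ((hK.mul_continuousOn_Icc hab hsq).const_mul _),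
          intervalIntegral.integral_const_mul, div_eq_inv_mul]
    _ ≤ ω * (√(∫ t in a..b, K t * (t - x) ^ 2) + (∫ t in a..b, K t * (t - x) ^ 2) / δ) := by
        gcongr
        exact modulusOn_nonneg

lemma abs_integral_mul_sub_le (hab : a ≤ b) (hK : IntervalIntegrable K volume a b)
    (hK0 : ∀ t ∈ Set.Icc a b, 0 ≤ K t) (hK1 : ∫ t in a..b, K t = 1) {f f' : ℝ → ℝ}
    (hf : ∀ y ∈ Set.Icc a b, HasDerivAt f (f' y) y) (hf' : ContinuousOn f' (Set.Icc a b))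
    {x δ : ℝ} (hx : x ∈ Set.Icc a b) (hδ : 0 < δ) :
    |(∫ t in a..b, K t * f t) - f x| ≤
      |f' x| * |∫ t in a..b, K t * (t - x)| +
        modulusOn (Set.Icc a b) f' δ * (1 + √(∫ t in a..b, K t * (t - x) ^ 2) / δ) *
          √(∫ t in a..b, K t * (t - x) ^ 2) := by
  set τ := ∫ t in a..b, K t * (t - x) ^ 2
  have hfc : ContinuousOn f (Set.Icc a b) := fun y hy => (hf y hy).continuousAt.continuousWithinAt
  have hlin : ContinuousOn (fun t : ℝ => t - x) (Set.Icc a b) := by fun_prop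
  have hτ : 0 ≤ τ := by
    simpa using integral_mul_mono_on hab hK hK0 continuousOn_const (by fun_prop)
      fun t _ => sq_nonneg (t - x)
  have hsplit : (∫ t in a..b, K t * f t) - f x = f' x * (∫ t in a..b, K t * (t - x))
      + ∫ t in a..b, K t * (f t - f x - f' x * (t - x)) := by
    have hpt : ∀ t, K t * (f t - f x - f' x * (t - x))
        = K t * f t - f x * K t - f' x * (K t * (t - x)) := fun t => by ring
    simp_rw [hpt]
    rw [intervalIntegral.integral_sub ((hK.mul_continuousOn_Icc hab hfc).sub (hK.const_mul _))
        ((hK.mul_continuousOn_Icc hab hlin).const_mul _),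
      intervalIntegral.integral_sub (hK.mul_continuousOn_Icc hab hfc) (hK.const_mul _),
      intervalIntegral.integral_const_mul, intervalIntegral.integral_const_mul, hK1]
    ring
  calc |(∫ t in a..b, K t * f t) - f x|
      ≤ |f' x| * |∫ t in a..b, K t * (t - x)|
        + |∫ t in a..b, K t * (f t - f x - f' x * (t - x))| := by
        rw [hsplit, ← abs_mul]
        exact abs_add_le _ _
    _ ≤ |f' x| * |∫ t in a..b, K t * (t - x)| + modulusOn (Set.Icc a b) f' δ * (√τ + τ / δ) := by
        gcongr
        exact abs_integral_mul_taylor_remainder_le hab hK hK0 hK1 hf hf' hx hδ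
    _ = |f' x| * |∫ t in a..b, K t * (t - x)|
          + modulusOn (Set.Icc a b) f' δ * (1 + √τ / δ) * √τ := by
        linear_combination (-modulusOn (Set.Icc a b) f' δ / δ) * Real.sq_sqrt hτ

end ProbabilityDensity

lemma integral_rpow_mul_one_sub_rpow {p q : ℝ} (hp : 0 < p) (hq : 0 < q) :
    ∫ t in (0 : ℝ)..1, t ^ (p - 1) * (1 - t) ^ (q - 1) = betaR p q := by
  have hcomplex : Complex.betaIntegral p q
      = ((∫ t in (0 : ℝ)..1, t ^ (p - 1) * (1 - t) ^ (q - 1) : ℝ) : ℂ) := by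
    rw [Complex.betaIntegral, ← intervalIntegral.integral_ofReal]
    refine intervalIntegral.integral_congr fun t ht => ?_
    rw [Set.uIcc_of_le zero_le_one] at ht
    simp only [Complex.ofReal_mul, Complex.ofReal_cpow ht.1,
      Complex.ofReal_cpow (sub_nonneg.mpr ht.2), Complex.ofReal_sub, Complex.ofReal_one]
  rw [show betaR p q = ProbabilityTheory.beta p q from rfl,
    ProbabilityTheory.beta_eq_betaIntegralReal p q hp hq, hcomplex, Complex.ofReal_re]

lemma betaR_add_one {p q : ℝ} (hp : 0 < p) (hq : 0 < q) :
    betaR (p + 1) q = p / (p + q) * betaR p q := by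
  have := (Real.Gamma_pos_of_pos (add_pos hp hq)).ne'
  unfold betaR
  rw [Real.Gamma_add_one hp.ne', add_right_comm, Real.Gamma_add_one (add_pos hp hq).ne']
  field_simp

lemma betaR_pos_s15 {p q : ℝ} (hp : 0 < p) (hq : 0 < q) : 0 < betaR p q :=
  ProbabilityTheory.beta_pos hp hq

section BetaDensity

variable {p q : ℝ}

lemma integral_rpow_mul_one_sub_rpow_div_betaR (hp : -1 < p) (hq : -1 < q) :
    ∫ t in (0 : ℝ)..1, t ^ p * (1 - t) ^ q / betaR (p + 1) (q + 1) = 1 := by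
  have hB := betaR_pos_s15 (by linarith : 0 < p + 1) (by linarith : 0 < q + 1)
  rw [intervalIntegral.integral_div, div_eq_one_iff_eq hB.ne',
    ← integral_rpow_mul_one_sub_rpow (by linarith) (by linarith)]
  simp only [add_sub_cancel_right]

lemma integral_rpow_mul_one_sub_rpow_div_betaR_mul_id (hp : -1 < p) (hq : -1 < q) :
    ∫ t in (0 : ℝ)..1, t ^ p * (1 - t) ^ q / betaR (p + 1) (q + 1) * t = (p + 1) / (p + q + 2) := by
  have hB := betaR_pos_s15 (by linarith : 0 < p + 1) (by linarith : 0 < q + 1)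
  calc ∫ t in (0 : ℝ)..1, t ^ p * (1 - t) ^ q / betaR (p + 1) (q + 1) * t
      = (∫ t in (0 : ℝ)..1, t ^ (p + 2 - 1) * (1 - t) ^ (q + 1 - 1)) / betaR (p + 1) (q + 1) := by
        rw [← intervalIntegral.integral_div]
        refine intervalIntegral.integral_congr fun t ht => ?_
        rw [Set.uIcc_of_le zero_le_one] at ht
        rw [show p + 2 - 1 = p + 1 by ring, add_sub_cancel_right,
          Real.rpow_add_one' ht.1 (by linarith)]
        ring
    _ = (p + 1) / (p + q + 2) := by
        rw [integral_rpow_mul_one_sub_rpow (by linarith) (by linarith),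
          show p + 2 = p + 1 + 1 by ring, betaR_add_one (by linarith) (by linarith),
          show p + 1 + (q + 1) = p + q + 2 by ring, mul_div_assoc, div_self hB.ne', mul_one]

end BetaDensity

section GeneralizedBernstein

open Polynomial

lemma sum_eval_bernsteinPolynomial (m : ℕ) (x : ℝ) :
    ∑ k ∈ range (m + 1), (bernsteinPolynomial ℝ m k).eval x = 1 := by
  simpa [eval_finsetSum] using congrArg (eval x) (bernsteinPolynomial.sum ℝ m)

lemma sum_mul_eval_bernsteinPolynomial (m : ℕ) (x : ℝ) :
    ∑ k ∈ range (m + 1), (k : ℝ) * (bernsteinPolynomial ℝ m k).eval x = m * x := by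
  simpa [eval_finsetSum, nsmul_eq_mul] using congrArg (eval x) (bernsteinPolynomial.sum_smul ℝ m)

variable {n : ℕ} {α x : ℝ}

lemma bernP_eq (hn : 2 ≤ n) (k : ℕ) :
    bernP n k α x = (1 - α) * (1 - x) * (bernsteinPolynomial ℝ (n - 2) k).eval x
      + (if 2 ≤ k then (1 - α) * x * (bernsteinPolynomial ℝ (n - 2) (k - 2)).eval x else 0)
      + α * (bernsteinPolynomial ℝ n k).eval x := by
  simp only [bernP, bernsteinPolynomial, eval_mul, eval_pow, eval_sub, eval_one, eval_X,
    eval_natCast]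
  have hfirst : ((n - 2).choose k : ℝ) * (1 - α) * x ^ k * (1 - x) ^ (n - k - 1)
      = (1 - α) * (1 - x) * ((n - 2).choose k * x ^ k * (1 - x) ^ (n - 2 - k)) := by
    rcases le_or_gt k (n - 2) with hk | hk
    · rw [show n - k - 1 = n - 2 - k + 1 by omega, pow_succ]
      ring
    · simp [Nat.choose_eq_zero_of_lt hk]
  have hsecond : (if 2 ≤ k then (((n - 2).choose (k - 2)) : ℝ) else 0) * (1 - α) * x ^ (k - 1)
        * (1 - x) ^ (n - k)
      = if 2 ≤ k then (1 - α) * x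
        * ((n - 2).choose (k - 2) * x ^ (k - 2) * (1 - x) ^ (n - 2 - (k - 2))) else 0 := by
    split_ifs with hk
    · rw [show k - 1 = k - 2 + 1 by omega, show n - 2 - (k - 2) = n - k by omega, pow_succ]
      ring
    · simp
  rw [hfirst, hsecond]
  ring

lemma sum_mul_bernP (hn : 2 ≤ n) (φ : ℕ → ℝ) :
    ∑ k ∈ range (n + 1), φ k * bernP n k α x
      = (1 - α) * (1 - x) * ∑ k ∈ range (n - 2 + 1), φ k * (bernsteinPolynomial ℝ (n - 2) k).eval x
        + (1 - α) * x * ∑ k ∈ range (n - 2 + 1),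
            φ (k + 2) * (bernsteinPolynomial ℝ (n - 2) k).eval x
        + α * ∑ k ∈ range (n + 1), φ k * (bernsteinPolynomial ℝ n k).eval x := by
  have hfirst : ∑ k ∈ range (n + 1),
        φ k * ((1 - α) * (1 - x) * (bernsteinPolynomial ℝ (n - 2) k).eval x)
      = (1 - α) * (1 - x) * ∑ k ∈ range (n - 2 + 1),
          φ k * (bernsteinPolynomial ℝ (n - 2) k).eval x := by
    rw [show n + 1 = n - 2 + 1 + 2 by omega, Finset.sum_range_add,
      Finset.sum_eq_zero (s := range 2) fun i _ => by
        rw [bernsteinPolynomial.eq_zero_of_lt ℝ (by omega)]; simp,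
      add_zero, Finset.mul_sum]
    exact Finset.sum_congr rfl fun k _ => by ring
  have hsecond : ∑ k ∈ range (n + 1), φ k *
        (if 2 ≤ k then (1 - α) * x * (bernsteinPolynomial ℝ (n - 2) (k - 2)).eval x else 0)
      = (1 - α) * x * ∑ k ∈ range (n - 2 + 1),
          φ (k + 2) * (bernsteinPolynomial ℝ (n - 2) k).eval x := by
    rw [show n + 1 = 2 + (n - 2 + 1) by omega, Finset.sum_range_add,
      Finset.sum_eq_zero (s := range 2) fun i hi => by
        simp [show ¬ 2 ≤ i from by simp at hi; omega],
      zero_add, Finset.mul_sum]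
    refine Finset.sum_congr rfl fun k _ => ?_
    rw [if_pos (by omega), Nat.add_sub_cancel_left, add_comm 2 k]
    ring
  have hthird : ∑ k ∈ range (n + 1), φ k * (α * (bernsteinPolynomial ℝ n k).eval x)
      = α * ∑ k ∈ range (n + 1), φ k * (bernsteinPolynomial ℝ n k).eval x := by
    rw [Finset.mul_sum]
    exact Finset.sum_congr rfl fun k _ => by ring
  simp only [bernP_eq hn, mul_add, Finset.sum_add_distrib]
  rw [hfirst, hsecond, hthird]

lemma sum_bernP (hn : 2 ≤ n) : ∑ k ∈ range (n + 1), bernP n k α x = 1 := by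
  have := sum_mul_bernP (α := α) (x := x) hn fun _ => 1
  simp only [one_mul, sum_eval_bernsteinPolynomial, mul_one] at this
  rw [this]
  ring

lemma sum_natCast_mul_bernP (hn : 2 ≤ n) :
    ∑ k ∈ range (n + 1), (k : ℝ) * bernP n k α x = n * x := by
  have := sum_mul_bernP (α := α) (x := x) hn fun k => (k : ℝ)
  simp only [Nat.cast_add, Nat.cast_ofNat, add_mul, Finset.sum_add_distrib, ← Finset.mul_sum,
    sum_mul_eval_bernsteinPolynomial, sum_eval_bernsteinPolynomial, Nat.cast_sub hn] at this
  rw [this]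
  ring

lemma bernP_nonneg (k : ℕ) (hα : α ∈ Set.Icc (0 : ℝ) 1) (hx : x ∈ Set.Icc (0 : ℝ) 1) :
    0 ≤ bernP n k α x := by
  have := sub_nonneg.mpr hα.2
  have := sub_nonneg.mpr hx.2
  have := hα.1
  have := hx.1
  unfold bernP
  positivity

end GeneralizedBernstein

section Operator

variable {n k : ℕ} {α ρ x : ℝ}

lemma continuous_muD (hk : k ≤ n) (hρ : 0 < ρ) : Continuous (muD n k ρ) := by
  have hk' : (0 : ℝ) ≤ n - k := sub_nonneg.mpr (by exact_mod_cast hk)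
  unfold muD
  exact ((continuous_id.rpow_const fun _ => Or.inr (by positivity)).mul
    ((continuous_const.sub continuous_id).rpow_const fun _ => Or.inr (by positivity))).div_const _

lemma muD_nonneg (hk : k ≤ n) (hρ : 0 < ρ) {t : ℝ} (ht : t ∈ Set.Icc (0 : ℝ) 1) :
    0 ≤ muD n k ρ t := by
  have hk' : (0 : ℝ) ≤ n - k := sub_nonneg.mpr (by exact_mod_cast hk)
  exact div_nonneg (mul_nonneg (Real.rpow_nonneg ht.1 _) (Real.rpow_nonneg (sub_nonneg.mpr ht.2) _))
    (betaR_pos_s15 (by positivity) (by positivity)).le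

lemma integral_muD (hk : k ≤ n) (hρ : 0 < ρ) : ∫ t in (0 : ℝ)..1, muD n k ρ t = 1 := by
  have hk' : (0 : ℝ) ≤ n - k := sub_nonneg.mpr (by exact_mod_cast hk)
  exact integral_rpow_mul_one_sub_rpow_div_betaR (by nlinarith) (by nlinarith)

lemma integral_muD_mul_id (hk : k ≤ n) (hρ : 0 < ρ) :
    ∫ t in (0 : ℝ)..1, muD n k ρ t * t = (k * ρ + 1) / (n * ρ + 2) := by
  have hk' : (0 : ℝ) ≤ n - k := sub_nonneg.mpr (by exact_mod_cast hk)
  rw [show (n : ℝ) * ρ + 2 = k * ρ + (n - k) * ρ + 2 by ring]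
  exact integral_rpow_mul_one_sub_rpow_div_betaR_mul_id (by nlinarith) (by nlinarith)

noncomputable def durrmeyerKernel (n : ℕ) (α ρ x t : ℝ) : ℝ :=
  ∑ k ∈ range (n + 1), bernP n k α x * muD n k ρ t

lemma continuous_durrmeyerKernel (hρ : 0 < ρ) : Continuous (durrmeyerKernel n α ρ x) :=
  continuous_finsetSum _ fun _ hk =>
    continuous_const.mul (continuous_muD (Nat.lt_succ_iff.mp (Finset.mem_range.mp hk)) hρ)

lemma durrmeyerKernel_nonneg (hρ : 0 < ρ) (hα : α ∈ Set.Icc (0 : ℝ) 1)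
    (hx : x ∈ Set.Icc (0 : ℝ) 1) {t : ℝ} (ht : t ∈ Set.Icc (0 : ℝ) 1) :
    0 ≤ durrmeyerKernel n α ρ x t :=
  Finset.sum_nonneg fun k hk => mul_nonneg (bernP_nonneg k hα hx)
    (muD_nonneg (Nat.lt_succ_iff.mp (Finset.mem_range.mp hk)) hρ ht)

lemma G_eq_integral_durrmeyerKernel_mul (hρ : 0 < ρ) {f : ℝ → ℝ}
    (hf : ContinuousOn f (Set.Icc (0 : ℝ) 1)) :
    G n α ρ f x = ∫ t in (0 : ℝ)..1, durrmeyerKernel n α ρ x t * f t := by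
  have hint : ∀ k ∈ range (n + 1), IntervalIntegrable (fun t => muD n k ρ t * f t) volume 0 1 :=
    fun k hk => (continuous_muD (Nat.lt_succ_iff.mp (Finset.mem_range.mp hk)) hρ).intervalIntegrable
      0 1 |>.mul_continuousOn_Icc zero_le_one hf
  simp only [G, durrmeyerKernel, Finset.sum_mul, mul_assoc]
  rw [intervalIntegral.integral_finsetSum fun k hk => (hint k hk).const_mul _]
  simp only [intervalIntegral.integral_const_mul]

lemma integral_durrmeyerKernel (hn : 2 ≤ n) (hρ : 0 < ρ) :
    ∫ t in (0 : ℝ)..1, durrmeyerKernel n α ρ x t = 1 := by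
  have := G_eq_integral_durrmeyerKernel_mul (n := n) (α := α) (x := x) hρ
    (continuousOn_const (c := (1 : ℝ)))
  simp only [mul_one] at this
  rw [← this, G]
  simp only [mul_one]
  rw [Finset.sum_congr rfl fun k hk => by
    rw [integral_muD (Nat.lt_succ_iff.mp (Finset.mem_range.mp hk)) hρ, mul_one], sum_bernP hn]

lemma integral_durrmeyerKernel_mul_sub (hn : 2 ≤ n) (hρ : 0 < ρ) :
    ∫ t in (0 : ℝ)..1, durrmeyerKernel n α ρ x t * (t - x) = (1 - 2 * x) / (n * ρ + 2) := by
  rw [← G_eq_integral_durrmeyerKernel_mul hρ (by fun_prop), G]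
  have hmoment : ∀ k ∈ range (n + 1), ∫ t in (0 : ℝ)..1, muD n k ρ t * (t - x)
      = (k * ρ + 1) / (n * ρ + 2) - x := by
    intro k hk
    have hk := Nat.lt_succ_iff.mp (Finset.mem_range.mp hk)
    simp only [mul_sub]
    have hμ := continuous_muD hk hρ
    have hid : IntervalIntegrable (fun t => muD n k ρ t * t) volume 0 1 :=
      (hμ.mul continuous_id').intervalIntegrable 0 1
    have hconst : IntervalIntegrable (fun t => muD n k ρ t * x) volume 0 1 :=
      (hμ.mul continuous_const).intervalIntegrable 0 1
    rw [intervalIntegral.integral_sub hid hconst,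
      intervalIntegral.integral_mul_const, integral_muD_mul_id hk hρ, integral_muD hk hρ, one_mul]
  rw [Finset.sum_congr rfl fun k hk => by rw [hmoment k hk]]
  have hden : (n : ℝ) * ρ + 2 ≠ 0 := by positivity
  calc ∑ k ∈ range (n + 1), bernP n k α x * ((k * ρ + 1) / (n * ρ + 2) - x)
      = (ρ * ∑ k ∈ range (n + 1), (k : ℝ) * bernP n k α x
          + (1 - x * (n * ρ + 2)) * ∑ k ∈ range (n + 1), bernP n k α x) / (n * ρ + 2) := by
        rw [Finset.mul_sum, Finset.mul_sum, ← Finset.sum_add_distrib, Finset.sum_div]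
        exact Finset.sum_congr rfl fun k _ => by field_simp; ring
    _ = (1 - 2 * x) / (n * ρ + 2) := by
        rw [sum_natCast_mul_bernP hn, sum_bernP hn]
        ring

end Operator

theorem G_first_derivative_estimate (f f' : ℝ → ℝ)
    (hf : ∀ y ∈ Set.Icc (0:ℝ) 1, HasDerivAt f (f' y) y)
    (hf' : ContinuousOn f' (Set.Icc (0:ℝ) 1))
    (n : ℕ) (hn : 2 ≤ n) (α ρ : ℝ)
    (hα : α ∈ Set.Icc (0:ℝ) 1) (hρ : 0 < ρ) (x : ℝ) (hx : x ∈ Set.Icc (0:ℝ) 1) :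
    (∀ δ : ℝ, 0 < δ →
      |G n α ρ f x - f x| ≤
        |f' x| * |1 - 2 * x| / ((n : ℝ) * ρ + 2) +
          (sSup {y : ℝ | ∃ u ∈ Set.Icc (0:ℝ) 1, ∃ v ∈ Set.Icc (0:ℝ) 1,
              |u - v| ≤ δ ∧ y = |f' u - f' v|}) *
            (1 + Real.sqrt (G n α ρ (fun t => (t - x) ^ 2) x) / δ) *
            Real.sqrt (G n α ρ (fun t => (t - x) ^ 2) x)) ∧
    (0 < G n α ρ (fun t => (t - x) ^ 2) x →
      |G n α ρ f x - f x| ≤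
        |f' x| * |1 - 2 * x| / ((n : ℝ) * ρ + 2) +
          2 * Real.sqrt (G n α ρ (fun t => (t - x) ^ 2) x) *
            sSup {y : ℝ | ∃ u ∈ Set.Icc (0:ℝ) 1, ∃ v ∈ Set.Icc (0:ℝ) 1,
              |u - v| ≤ Real.sqrt (G n α ρ (fun t => (t - x) ^ 2) x) ∧
                y = |f' u - f' v|}) := by
  have hfc : ContinuousOn f (Set.Icc (0 : ℝ) 1) :=
    fun y hy => (hf y hy).continuousAt.continuousWithinAt
  have hden : (0 : ℝ) < n * ρ + 2 := by positivity
  have hestimate : ∀ δ : ℝ, 0 < δ → |G n α ρ f x - f x| ≤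
      |f' x| * |1 - 2 * x| / (n * ρ + 2) + modulusOn (Set.Icc 0 1) f' δ *
        (1 + √(G n α ρ (fun t => (t - x) ^ 2) x) / δ) * √(G n α ρ (fun t => (t - x) ^ 2) x) := by
    intro δ hδ
    have := abs_integral_mul_sub_le zero_le_one
      ((continuous_durrmeyerKernel hρ).intervalIntegrable 0 1)
      (fun t => durrmeyerKernel_nonneg hρ hα hx) (integral_durrmeyerKernel hn hρ) hf hf' hx hδ
    rwa [integral_durrmeyerKernel_mul_sub hn hρ, abs_div, abs_of_pos hden, ← mul_div_assoc,
      ← G_eq_integral_durrmeyerKernel_mul hρ hfc,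
      ← G_eq_integral_durrmeyerKernel_mul hρ (by fun_prop)] at this
  refine ⟨hestimate, fun hτ => ?_⟩
  have hs := Real.sqrt_pos.mpr hτ
  calc |G n α ρ f x - f x| ≤ _ := hestimate _ hs
    _ = _ := by rw [div_self hs.ne', modulusOn]; ring
end
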